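/- For a 4D Gaussian with mean μ = (μ_{1:3}, μ_t) and covariance Σ' = VΣVᵀ (V the Galilean shearing matrix with velocity v, Σ_tt > 0), the conditional mean of the spatial coordinates given time t equals μ_{1:3} + (Σ_xt Σ_tt⁻¹ + v)(t − μ_t). -/

import Mathlib

/-
The shear `V = [[1, v], [0, 1]]` adds `v` times the time row to the spatial rows, so in `V Σ Vᵀ`
the time–time variance is unchanged and the spatial–time covariance becomes `Σ_xt + v Σ_tt`.
Dividing by `Σ_tt` turns the regression coefficient `Σ_xt Σ_tt⁻¹` into `Σ_xt Σ_tt⁻¹ + v`.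
-/

open Matrix

/-- The Galilean shearing matrix `V = [[I₃, v],[0,1]]` as a 4×4 block matrix,
indexed by `Fin 3 ⊕ Unit`. -/
noncomputable def galV (v : Fin 3 → ℝ) : Matrix (Fin 3 ⊕ Unit) (Fin 3 ⊕ Unit) ℝ :=
  Matrix.fromBlocks 1 (Matrix.replicateCol Unit v) 0 1

namespace Matrix

variable {m n α : Type*} [Fintype m] [Fintype n] [DecidableEq m] [DecidableEq n] [Semiring α]

theorem fromBlocks_shear_mul_mul_transpose (B : Matrix m n α) (S : Matrix (m ⊕ n) (m ⊕ n) α) :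
    fromBlocks 1 B 0 1 * S * (fromBlocks 1 B 0 1)ᵀ =
      fromBlocks
        (S.toBlocks₁₁ + B * S.toBlocks₂₁ + (S.toBlocks₁₂ + B * S.toBlocks₂₂) * Bᵀ)
        (S.toBlocks₁₂ + B * S.toBlocks₂₂)
        (S.toBlocks₂₁ + S.toBlocks₂₂ * Bᵀ)
        S.toBlocks₂₂ := by
  conv_lhs => rw [← fromBlocks_toBlocks S]
  simp [fromBlocks_transpose, fromBlocks_multiply]

end Matrix

section galV

variable (v : Fin 3 → ℝ) (S : Matrix (Fin 3 ⊕ Unit) (Fin 3 ⊕ Unit) ℝ)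

theorem galV_mul_mul_transpose_toBlocks₁₂_apply (i : Fin 3) :
    (galV v * S * (galV v)ᵀ).toBlocks₁₂ i () =
      S.toBlocks₁₂ i () + v i * S (Sum.inr ()) (Sum.inr ()) := by
  rw [galV, fromBlocks_shear_mul_mul_transpose, toBlocks_fromBlocks₁₂, Matrix.add_apply,
    mul_apply, Fintype.sum_unique, replicateCol_apply]
  rfl

theorem galV_mul_mul_transpose_inr_inr :
    (galV v * S * (galV v)ᵀ) (Sum.inr ()) (Sum.inr ()) = S (Sum.inr ()) (Sum.inr ()) := by
  rw [galV, fromBlocks_shear_mul_mul_transpose, fromBlocks_apply₂₂]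
  rfl

end galV

theorem galV_conditional_mean_general (v : Fin 3 → ℝ)
    (S : Matrix (Fin 3 ⊕ Unit) (Fin 3 ⊕ Unit) ℝ)
    (htt : 0 < S (Sum.inr ()) (Sum.inr ())) (μ : (Fin 3 ⊕ Unit) → ℝ) (t : ℝ) :
    (fun i : Fin 3 =>
        μ (Sum.inl i) +
          ((galV v * S * (galV v)ᵀ).toBlocks₁₂ i () *
              ((galV v * S * (galV v)ᵀ) (Sum.inr ()) (Sum.inr ()))⁻¹) *
            (t - μ (Sum.inr ()))) =
    (fun i : Fin 3 =>
        μ (Sum.inl i) +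
          (S.toBlocks₁₂ i () * (S (Sum.inr ()) (Sum.inr ()))⁻¹ + v i) *
            (t - μ (Sum.inr ()))) := by
  funext i
  rw [galV_mul_mul_transpose_toBlocks₁₂_apply, galV_mul_mul_transpose_inr_inr,
    add_mul (S.toBlocks₁₂ i ()), mul_inv_cancel_right₀ htt.ne']

/-- For a 4D Gaussian with mean `μ = (μ₁:₃, μₜ)` and sheared covariance
`Σ' = V Σ Vᵀ` (with `Σtt > 0`), the conditional mean of the spatial coordinates
given time `t`, namely `μ₁:₃ + Σ'_xt (Σ'_tt)⁻¹ (t − μₜ)`, equals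
`μ₁:₃ + (Σ_xt Σ_tt⁻¹ + v)(t − μₜ)`. -/
theorem galV_conditional_mean (v : Fin 3 → ℝ)
    (S : Matrix (Fin 3 ⊕ Unit) (Fin 3 ⊕ Unit) ℝ) (hS : S.IsSymm)
    (htt : 0 < S (Sum.inr ()) (Sum.inr ())) (μ : (Fin 3 ⊕ Unit) → ℝ) (t : ℝ) :
    (fun i : Fin 3 =>
        μ (Sum.inl i) +
          ((galV v * S * (galV v)ᵀ).toBlocks₁₂ i () *
              ((galV v * S * (galV v)ᵀ) (Sum.inr ()) (Sum.inr ()))⁻¹) *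
            (t - μ (Sum.inr ()))) =
    (fun i : Fin 3 =>
        μ (Sum.inl i) +
          (S.toBlocks₁₂ i () * (S (Sum.inr ()) (Sum.inr ()))⁻¹ + v i) *
            (t - μ (Sum.inr ()))) :=
  galV_conditional_mean_general v S htt μ t
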